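/- Let n ≥ k+2, a ∈ (0,n], s > 0 with s ∈ (a−(n−k), min{a,k}]. Suppose real numbers a₁, s₁ satisfy max{0,a−1} ≤ a₁ ≤ min{n−1,a} and 0 ≤ s₁ ≤ s. Then M(a₁,s₁;n−1,k) + M(s₁+a−a₁, s; k+1, k) ≤ M(a,s;n,k). -/
import Mathlib


/-- The Marstrand index `M(a,s;n,k)` of the paper, an element of `EReal`
(with `⊥ = -∞` for Type 4).  Write the canonical expressions `a = m + β`,
`s = l + γ` with `m, l ∈ ℕ` and `β, γ ∈ (0,1]` (so `m = ⌈a⌉ - 1`, etc.).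
Type 4: if `s ≤ a - (n-k)`, `M = -∞`.  Type 1: if `s > min a k`, `M = k(n-k)`.
Type 2 (`γ ∈ (β,1]`): `M = k(n-k) - (m-l)(k-l) + max (2γ-(β+1)) 0`.
Type 3 (`γ ∈ (0,β]`): `M = k(n-k) - (m+1-l)(k-l) + max (2γ-β) 0`. -/
noncomputable def mIndex (n k : ℕ) (a s : ℝ) : EReal :=
  if s ≤ a - ((n : ℝ) - k) then ⊥
  else if min a k < s then ((k * ((n : ℝ) - k) : ℝ) : EReal)
  else
    let m : ℤ := ⌈a⌉ - 1
    let β : ℝ := a - m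
    let l : ℤ := ⌈s⌉ - 1
    let γ : ℝ := s - l
    if β < γ then
      ((k * ((n : ℝ) - k) - ((m : ℝ) - l) * ((k : ℝ) - l)
        + max (2 * γ - (β + 1)) 0 : ℝ) : EReal)
    else
      ((k * ((n : ℝ) - k) - ((m : ℝ) + 1 - l) * ((k : ℝ) - l)
        + max (2 * γ - β) 0 : ℝ) : EReal)

set_option maxHeartbeats 1000000

noncomputable def eDef (k : ℕ) (a s : ℝ) : ℝ :=
  ((⌊a - s⌋ : ℝ) + 1) * ((k : ℝ) - ((⌈s⌉ : ℝ) - 1))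
    - max ((s - ((⌈s⌉ : ℝ) - 1)) - (a - s - (⌊a - s⌋ : ℝ))) 0

lemma mIndex_eq (n k : ℕ) (a s : ℝ) :
    mIndex n k a s = if s ≤ a - ((n : ℝ) - k) then ⊥
      else if min a k < s then ((k * ((n : ℝ) - k) : ℝ) : EReal)
      else ((k * ((n : ℝ) - k) - eDef k a s : ℝ) : EReal) := by
  unfold mIndex
  split_ifs with h1 h2
  · rfl
  · rfl
  simp only []
  split_ifs with h3
  · -- Type 2: a - (⌈a⌉-1) < s - (⌈s⌉-1)
    have hca := Int.ceil_lt_add_one a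
    have hca' := Int.le_ceil a
    have hcs := Int.le_ceil s
    have hfl : ⌊a - s⌋ = ⌈a⌉ - ⌈s⌉ - 1 := by
      rw [Int.floor_eq_iff]
      push_cast at h3 ⊢
      constructor
      · linarith
      · linarith
    norm_num only
    congr 1
    unfold eDef
    rw [hfl]
    push_cast
    rw [show (s - ((⌈s⌉:ℝ) - 1)) - (a - s - ((⌈a⌉:ℝ) - ⌈s⌉ - 1)) =
        2 * (s - ((⌈s⌉:ℝ) - 1)) - ((a - ((⌈a⌉:ℝ) - 1)) + 1) by ring]
    ring
  · -- Type 3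
    have hca := Int.ceil_lt_add_one a
    have hca' := Int.le_ceil a
    have hcs := Int.le_ceil s
    have hcs' := Int.ceil_lt_add_one s
    have hfl : ⌊a - s⌋ = ⌈a⌉ - ⌈s⌉ := by
      rw [Int.floor_eq_iff]
      push_cast at h3 ⊢
      constructor
      · linarith
      · linarith
    norm_num only
    congr 1
    unfold eDef
    rw [hfl]
    push_cast
    rw [show (s - ((⌈s⌉:ℝ) - 1)) - (a - s - ((⌈a⌉:ℝ) - ⌈s⌉)) =
        2 * (s - ((⌈s⌉:ℝ) - 1)) - (a - ((⌈a⌉:ℝ) - 1)) by ring]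
    ring
set_option maxHeartbeats 1000000


/-- Case: second term is Type 1 (`s₁ + a - a₁ < s`). -/
lemma eDef_A (k : ℕ) (a s a₁ s₁ : ℝ) (hsk : s ≤ (k : ℝ))
    (hy : s₁ ≤ s) (hsa : s ≤ a) (h2 : s₁ + a - a₁ < s) :
    eDef k a s ≤ eDef k a₁ s₁ := by
  unfold eDef
  have hKL : (⌈s⌉ : ℤ) ≤ (k : ℤ) := Int.ceil_le.mpr (by exact_mod_cast hsk)
  have hL1L : (⌈s₁⌉ : ℤ) ≤ ⌈s⌉ := Int.ceil_le_ceil hy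
  have hq0 : (0 : ℤ) ≤ ⌊a - s⌋ := Int.floor_nonneg.mpr (by linarith)
  have hq1q : ⌊a - s⌋ ≤ ⌊a₁ - s₁⌋ := Int.floor_le_floor (by linarith)
  have hfq₁ := Int.floor_le (a - s); have hfq₂ := Int.lt_floor_add_one (a - s)
  have hfq1₁ := Int.floor_le (a₁ - s₁); have hfq1₂ := Int.lt_floor_add_one (a₁ - s₁)
  have hcs₁ := Int.le_ceil s; have hcs₂ := Int.ceil_lt_add_one s
  have hcs1₁ := Int.le_ceil s₁; have hcs1₂ := Int.ceil_lt_add_one s₁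
  have hKLr : ((⌈s⌉ : ℝ)) ≤ (k : ℝ) := by exact_mod_cast hKL
  have hq0r : (0 : ℝ) ≤ (⌊a - s⌋ : ℝ) := by exact_mod_cast hq0
  rcases eq_or_lt_of_le hq1q with hqe | hql
  · rcases eq_or_lt_of_le hL1L with hle | hll
    · -- q₁ = q, l₁ = l
      rw [← hqe] at hfq1₁ hfq1₂
      rw [hle] at hcs1₁ hcs1₂
      rw [← hqe, hle]
      simp only [max_def]
      split_ifs <;> linarith
    · -- l₁ < l : big main-term gap
      have hLr : ((⌈s₁⌉ : ℝ)) + 1 ≤ (⌈s⌉ : ℝ) := by exact_mod_cast hll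
      have hq1r : ((⌊a - s⌋ : ℝ)) ≤ (⌊a₁ - s₁⌋ : ℝ) := by exact_mod_cast hq1q
      have hp1 : ((⌊a - s⌋ : ℝ) + 1) * ((k:ℝ) - ((⌈s⌉:ℝ) - 1)) + 1
          ≤ ((⌊a₁ - s₁⌋ : ℝ) + 1) * ((k:ℝ) - ((⌈s₁⌉:ℝ) - 1)) := by
        nlinarith [mul_nonneg (by linarith : (0:ℝ) ≤ (⌊a₁ - s₁⌋:ℝ) - (⌊a - s⌋:ℝ))
            (by linarith : (0:ℝ) ≤ (k:ℝ) - ((⌈s₁⌉:ℝ) - 1)),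
          mul_nonneg (by linarith : (0:ℝ) ≤ (⌊a - s⌋:ℝ) + 1)
            (by linarith : (0:ℝ) ≤ (⌈s⌉:ℝ) - (⌈s₁⌉:ℝ) - 1)]
      simp only [max_def]
      split_ifs <;> linarith [hp1]
  · -- q < q₁
    have hq1r : ((⌊a - s⌋ : ℝ)) + 1 ≤ (⌊a₁ - s₁⌋ : ℝ) := by exact_mod_cast hql
    have hLr : ((⌈s₁⌉ : ℝ)) ≤ (⌈s⌉ : ℝ) := by exact_mod_cast hL1L
    have hp1 : ((⌊a - s⌋ : ℝ) + 1) * ((k:ℝ) - ((⌈s⌉:ℝ) - 1)) + 1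
        ≤ ((⌊a₁ - s₁⌋ : ℝ) + 1) * ((k:ℝ) - ((⌈s₁⌉:ℝ) - 1)) := by
      nlinarith [mul_nonneg (by linarith : (0:ℝ) ≤ (⌊a₁ - s₁⌋:ℝ) - (⌊a - s⌋:ℝ) - 1)
          (by linarith : (0:ℝ) ≤ (k:ℝ) - ((⌈s₁⌉:ℝ) - 1)),
        mul_nonneg (by linarith : (0:ℝ) ≤ (⌊a - s⌋:ℝ) + 1)
          (by linarith : (0:ℝ) ≤ (⌈s⌉:ℝ) - (⌈s₁⌉:ℝ))]
    simp only [max_def]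
    split_ifs <;> linarith [hp1]

/-- Case: first term is Type 1 (`a₁ < s₁`). -/
lemma eDef_B (k : ℕ) (a s a₁ s₁ : ℝ)
    (hsa : s ≤ a) (h1 : a₁ < s₁)
    (h2lo : s ≤ s₁ + a - a₁) (h2hi : s₁ + a - a₁ < s + 1) :
    eDef k a s ≤ eDef k (s₁ + a - a₁) s := by
  have hq2 : ⌊s₁ + a - a₁ - s⌋ = 0 := by
    rw [Int.floor_eq_zero_iff, Set.mem_Ico]
    constructor <;> linarith
  have hq : ⌊a - s⌋ = 0 := by
    rw [Int.floor_eq_zero_iff, Set.mem_Ico]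
    constructor <;> linarith
  unfold eDef
  rw [hq2, hq]
  have hcs₁ := Int.le_ceil s
  push_cast
  simp only [max_def]
  split_ifs <;> linarith

lemma eDef_main (k : ℕ) (a s a₁ s₁ : ℝ) (hsk : s ≤ (k : ℝ))
    (hy : s₁ ≤ s) (hsa1 : s₁ ≤ a₁)
    (h2lo : s ≤ s₁ + a - a₁) (h2hi : s₁ + a - a₁ < s + 1) :
    eDef k a s ≤ eDef k a₁ s₁ + eDef k (s₁ + a - a₁) s := by
  have hq2 : ⌊s₁ + a - a₁ - s⌋ = 0 := by
    rw [Int.floor_eq_zero_iff, Set.mem_Ico]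
    constructor <;> linarith
  unfold eDef
  rw [hq2]
  have hKL : (⌈s⌉ : ℤ) ≤ (k : ℤ) := Int.ceil_le.mpr (by exact_mod_cast hsk)
  have hL1L : (⌈s₁⌉ : ℤ) ≤ ⌈s⌉ := Int.ceil_le_ceil hy
  have hq10 : (0 : ℤ) ≤ ⌊a₁ - s₁⌋ := Int.floor_nonneg.mpr (by linarith)
  have hq1q : ⌊a₁ - s₁⌋ ≤ ⌊a - s⌋ := Int.floor_le_floor (by linarith)
  have hqq1 : ⌊a - s⌋ - 1 ≤ ⌊a₁ - s₁⌋ := by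
    have : ⌊a - s - 1⌋ ≤ ⌊a₁ - s₁⌋ := Int.floor_le_floor (by linarith)
    simpa using this
  have hfq₁ := Int.floor_le (a - s); have hfq₂ := Int.lt_floor_add_one (a - s)
  have hfq1₁ := Int.floor_le (a₁ - s₁); have hfq1₂ := Int.lt_floor_add_one (a₁ - s₁)
  have hcs₁ := Int.le_ceil s; have hcs₂ := Int.ceil_lt_add_one s
  have hcs1₁ := Int.le_ceil s₁; have hcs1₂ := Int.ceil_lt_add_one s₁
  have hKLr : ((⌈s⌉ : ℝ)) ≤ (k : ℝ) := by exact_mod_cast hKL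
  have hq10r : (0 : ℝ) ≤ (⌊a₁ - s₁⌋ : ℝ) := by exact_mod_cast hq10
  have hqcase : ⌊a₁ - s₁⌋ = ⌊a - s⌋ ∨ ⌊a₁ - s₁⌋ = ⌊a - s⌋ - 1 := by omega
  have hlcase : (⌈s₁⌉ : ℤ) = ⌈s⌉ ∨ (⌈s₁⌉ : ℤ) ≤ ⌈s⌉ - 1 := by omega
  rcases hqcase with hq | hq
  · rw [hq] at hfq1₁ hfq1₂ hq10r
    rcases hlcase with hl | hl
    · -- q₁ = q, l₁ = l
      rw [hl] at hcs1₁ hcs1₂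
      rw [hq, hl]
      push_cast
      simp only [max_def]
      split_ifs <;> linarith
    · -- q₁ = q, l₁ < l
      rw [hq]
      have hLr : ((⌈s₁⌉ : ℝ)) + 1 ≤ (⌈s⌉ : ℝ) := by exact_mod_cast (by omega : (⌈s₁⌉:ℤ) + 1 ≤ ⌈s⌉)
      have hp1 : (1:ℝ) ≤ ((⌊a - s⌋ : ℝ) + 1) * ((⌈s⌉ : ℝ) - (⌈s₁⌉ : ℝ)) := by
        nlinarith [mul_nonneg hq10r (by linarith : (0:ℝ) ≤ (⌈s⌉:ℝ) - (⌈s₁⌉:ℝ) - 1)]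
      push_cast
      simp only [max_def]
      split_ifs <;> linarith [hp1]
  · rw [hq] at hfq1₁ hfq1₂ hq10r
    push_cast at hfq1₁ hfq1₂ hq10r
    have hq1r : (1:ℝ) ≤ (⌊a - s⌋ : ℝ) := by linarith
    rcases hlcase with hl | hl
    · -- q₁ = q - 1, l₁ = l
      rw [hl] at hcs1₁ hcs1₂
      rw [hq, hl]
      push_cast
      simp only [max_def]
      split_ifs <;> linarith
    · -- q₁ = q - 1, l₁ < l
      rw [hq]
      have hLr : ((⌈s₁⌉ : ℝ)) + 1 ≤ (⌈s⌉ : ℝ) := by exact_mod_cast (by omega : (⌈s₁⌉:ℤ) + 1 ≤ ⌈s⌉)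
      have hp1 : (1:ℝ) ≤ ((⌊a - s⌋ : ℝ)) * ((⌈s⌉ : ℝ) - (⌈s₁⌉ : ℝ)) := by
        nlinarith [mul_nonneg (by linarith : (0:ℝ) ≤ (⌊a - s⌋:ℝ) - 1) (by linarith : (0:ℝ) ≤ (⌈s⌉:ℝ) - (⌈s₁⌉:ℝ) - 1)]
      push_cast
      simp only [max_def]
      split_ifs <;> linarith [hp1]
/-- Let `n ≥ k+2`, `a ∈ (0,n]`, `s ∈ (a-(n-k), min a k]`. If
`max 0 (a-1) ≤ a₁ ≤ min (n-1) a` and `0 < s₁ ≤ s`, then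
`M(a₁,s₁;n-1,k) + M(s₁+a-a₁, s; k+1, k) ≤ M(a,s;n,k)`. -/
theorem stmt_17 (n k : ℕ) (hk1 : 1 ≤ k) (hn : k + 2 ≤ n) (a s a₁ s₁ : ℝ)
    (ha : 0 < a) (han : a ≤ n)
    (hs1 : a - ((n : ℝ) - k) < s) (hs2 : s ≤ min a k)
    (ha1 : max 0 (a - 1) ≤ a₁) (ha1' : a₁ ≤ min ((n : ℝ) - 1) a)
    (hs1' : 0 < s₁) (hs1'' : s₁ ≤ s) :
    mIndex (n - 1) k a₁ s₁ + mIndex (k + 1) k (s₁ + a - a₁) s ≤ mIndex n k a s := by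
  have hsa : s ≤ a := le_trans hs2 (min_le_left _ _)
  have hskr : s ≤ (k : ℝ) := le_trans hs2 (min_le_right _ _)
  have ha1a : a₁ ≤ a := le_trans ha1' (min_le_right _ _)
  have hxa : a - 1 ≤ a₁ := le_trans (le_max_right _ _) ha1
  have hn1 : ((n - 1 : ℕ) : ℝ) = (n : ℝ) - 1 := by
    have : (1:ℕ) ≤ n := by omega
    push_cast [Nat.cast_sub this]
    ring
  rw [mIndex_eq, mIndex_eq, mIndex_eq, hn1]
  rw [if_neg (not_le.mpr hs1), if_neg (not_lt.mpr hs2)]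
  by_cases hbot1 : s₁ ≤ a₁ - ((n : ℝ) - 1 - (k : ℝ))
  · rw [if_pos hbot1, EReal.bot_add]; exact bot_le
  rw [if_neg hbot1]
  by_cases hbot2 : s ≤ s₁ + a - a₁ - (((k + 1 : ℕ) : ℝ) - (k : ℝ))
  · rw [if_pos hbot2, EReal.add_bot]; exact bot_le
  rw [if_neg hbot2]
  have h2hi : s₁ + a - a₁ < s + 1 := by
    push_cast at hbot2
    linarith [not_le.mp hbot2]
  by_cases ht1 : min a₁ (k : ℝ) < s₁
  · have ha1s1 : a₁ < s₁ := by
      rcases min_lt_iff.mp ht1 with h | h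
      · exact h
      · linarith
    rw [if_pos ht1]
    by_cases ht2 : min (s₁ + a - a₁) (k : ℝ) < s
    · exfalso
      rcases min_lt_iff.mp ht2 with h | h <;> linarith
    · rw [if_neg ht2]
      rw [← EReal.coe_add, EReal.coe_le_coe_iff]
      have h2lo : s ≤ s₁ + a - a₁ := (le_min_iff.mp (not_lt.mp ht2)).1
      have := eDef_B k a s a₁ s₁ hsa ha1s1 h2lo h2hi
      push_cast
      nlinarith [this]
  · rw [if_neg ht1]
    have hs1a1 : s₁ ≤ a₁ := (le_min_iff.mp (not_lt.mp ht1)).1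
    by_cases ht2 : min (s₁ + a - a₁) (k : ℝ) < s
    · have h2 : s₁ + a - a₁ < s := by
        rcases min_lt_iff.mp ht2 with h | h
        · exact h
        · linarith
      rw [if_pos ht2]
      rw [← EReal.coe_add, EReal.coe_le_coe_iff]
      have := eDef_A k a s a₁ s₁ hskr hs1'' hsa h2
      push_cast
      nlinarith [this]
    · rw [if_neg ht2]
      rw [← EReal.coe_add, EReal.coe_le_coe_iff]
      have h2lo : s ≤ s₁ + a - a₁ := (le_min_iff.mp (not_lt.mp ht2)).1
      have := eDef_main k a s a₁ s₁ hskr hs1'' hs1a1 h2lo h2hi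
      push_cast
      nlinarith [this]
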